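/- Suppose a compact Hausdorff topological group G acts consistently on a compact Hausdorff projective family (X_S, p_{S S'}): each action G × X_S → X_S is continuous and the projections are equivariant, p_{S S'}(x_{S'} · g) = p_{S S'}(x_{S'}) · g. Let X̄ be the projective limit, on which G acts componentwise, and let X̄_G be the projective limit of the quotient family (X_S/G, with the induced projections). Then the natural map from the orbit space X̄/G (with the quotient topology) to X̄_G, sending the orbit of (x_S)_{S∈L} to the family ([x_S])_{S∈L} of orbits, is a homeomorphism. -/

import Mathlib

/-!
The natural map is a continuous map from a compact space to a Hausdorff one, so it is enough
that it be bijective. Each `X S / G` is Hausdorff because the quotient map is open and the orbit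
relation is the projection of a closed subset of `X S × X S × G` along the compact factor `G`.
Injectivity and surjectivity are both Cantor's intersection theorem over the directed set `L`:
if `x_S` and `y_S` lie in the same orbit for every `S`, then the closed sets
`{g | x_S · g = y_S}` decrease along `L` and have a common point; a thread of orbits lifts to a
thread of points because the fibres over it are nonempty, closed, and mapped into each other.
-/

section Setup

variable {L : Type*} [PartialOrder L] (X : L → Type*)
  (p : ∀ S S', S ≤ S' → X S' → X S) {G : Type*} (a : ∀ S, X S → G → X S)

/-- The projective limit of a projective family, as a subspace of the product space. -/
def ProjLim : Type _ :=
  {x : ∀ S, X S // ∀ S S' (h : S ≤ S'), p S S' h (x S') = x S}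

/-- The Tychonov (subspace-of-product) topology on the projective limit. -/
instance [∀ S, TopologicalSpace (X S)] : TopologicalSpace (ProjLim X p) :=
  inferInstanceAs (TopologicalSpace {x : ∀ S, X S // ∀ S S' (h : S ≤ S'), p S S' h (x S') = x S})

/-- The orbit relation of the (right) `G`-action `a` on `X S`. -/
def OrbRel (S : L) : X S → X S → Prop := fun x y => ∃ g : G, a S x g = y

/-- The quotient `X S / G` of a member of the family by the group action,
with the quotient topology. -/
def QuotFam (S : L) : Type _ := Quot (OrbRel X a S)

instance (S : L) [TopologicalSpace (X S)] : TopologicalSpace (QuotFam X a S) :=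
  inferInstanceAs (TopologicalSpace (Quot (OrbRel X a S)))

/-- The projection `X S' / G → X S / G` induced by an equivariant projection `p`. -/
def QuotProj
    (hequiv : ∀ (S S' : L) (h : S ≤ S') (x : X S') (g : G),
      p S S' h (a S' x g) = a S (p S S' h x) g)
    (S S' : L) (h : S ≤ S') : QuotFam X a S' → QuotFam X a S :=
  Quot.lift (fun x => Quot.mk (OrbRel X a S) (p S S' h x))
    (by rintro x y ⟨g, rfl⟩; exact Quot.sound ⟨g, (hequiv S S' h x g).symm⟩)

/-- The projective limit `X̄_G` of the quotient family `(X S / G)`. -/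
def QuotFamLim
    (hequiv : ∀ (S S' : L) (h : S ≤ S') (x : X S') (g : G),
      p S S' h (a S' x g) = a S (p S S' h x) g) : Type _ :=
  {x : ∀ S, QuotFam X a S // ∀ S S' (h : S ≤ S'), QuotProj X p a hequiv S S' h (x S') = x S}

instance [∀ S, TopologicalSpace (X S)]
    (hequiv : ∀ (S S' : L) (h : S ≤ S') (x : X S') (g : G),
      p S S' h (a S' x g) = a S (p S S' h x) g) :
    TopologicalSpace (QuotFamLim X p a hequiv) :=
  inferInstanceAs (TopologicalSpace
    {x : ∀ S, QuotFam X a S // ∀ S S' (h : S ≤ S'), QuotProj X p a hequiv S S' h (x S') = x S})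

/-- The componentwise orbit relation of `G` on the projective limit `X̄`;
its quotient `Quot (LimOrbRel X p a)` is the orbit space `X̄/G` with the
quotient topology. -/
def LimOrbRel : ProjLim X p → ProjLim X p → Prop :=
  fun x y => ∃ g : G, ∀ S, a S (x.1 S) g = y.1 S

/-- The natural map `X̄/G → X̄_G`, sending the orbit of `(x_S)_S` to `([x_S])_S`. -/
def NatMap
    (hequiv : ∀ (S S' : L) (h : S ≤ S') (x : X S') (g : G),
      p S S' h (a S' x g) = a S (p S S' h x) g) :
    Quot (LimOrbRel X p a) → QuotFamLim X p a hequiv :=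
  Quot.lift
    (fun x => ⟨fun S => Quot.mk (OrbRel X a S) (x.1 S),
      fun S S' h => congrArg (Quot.mk (OrbRel X a S)) (x.2 S S' h)⟩)
    (by
      rintro x y ⟨g, hg⟩
      apply Subtype.ext
      funext S
      exact Quot.sound ⟨g, hg S⟩)

end Setup

open Set

section OrbitQuotient

variable {Y G : Type*} [Group G] (b : Y → G → Y)

theorem equivalence_orbit (hone : ∀ y, b y 1 = y)
    (hmul : ∀ y g g', b (b y g) g' = b y (g * g')) :
    Equivalence fun x y : Y => ∃ g : G, b x g = y where
  refl x := ⟨1, hone x⟩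
  symm := by
    rintro x y ⟨g, rfl⟩
    exact ⟨g⁻¹, by rw [hmul, mul_inv_cancel, hone]⟩
  trans := by
    rintro x y z ⟨g, rfl⟩ ⟨g', rfl⟩
    exact ⟨g * g', (hmul x g g').symm⟩

variable [TopologicalSpace Y]

theorem isOpenQuotientMap_quot_mk_orbit (hb : ∀ g, Continuous (b · g))
    (hone : ∀ y, b y 1 = y) (hmul : ∀ y g g', b (b y g) g' = b y (g * g')) :
    IsOpenQuotientMap (Quot.mk fun x y : Y => ∃ g : G, b x g = y) := by
  set r : Y → Y → Prop := fun x y => ∃ g : G, b x g = y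
  have hr : Equivalence r := equivalence_orbit b hone hmul
  refine ⟨Quot.mk_surjective, continuous_quot_mk, fun U hU => ?_⟩
  have hsat : Quot.mk r ⁻¹' (Quot.mk r '' U) = ⋃ g : G, (b · g) ⁻¹' U := by
    ext x
    simp only [mem_preimage, mem_image, mem_iUnion, hr.quot_mk_eq_iff]
    constructor
    · rintro ⟨y, hy, hyx⟩
      obtain ⟨g, rfl⟩ := hr.symm hyx
      exact ⟨g, hy⟩
    · rintro ⟨g, hg⟩
      exact ⟨b x g, hg, hr.symm ⟨g, rfl⟩⟩
  rw [isOpen_coinduced, hsat]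
  exact isOpen_iUnion fun g => (hb g).isOpen_preimage U hU

theorem t2Space_quot_orbit [TopologicalSpace G] [CompactSpace G] [T2Space Y]
    (hb : Continuous fun q : Y × G => b q.1 q.2)
    (hone : ∀ y, b y 1 = y) (hmul : ∀ y g g', b (b y g) g' = b y (g * g')) :
    T2Space (Quot fun x y : Y => ∃ g : G, b x g = y) := by
  set r : Y → Y → Prop := fun x y => ∃ g : G, b x g = y
  rw [t2Space_iff_of_isOpenQuotientMap
    (isOpenQuotientMap_quot_mk_orbit b (fun g => by fun_prop) hone hmul)]
  -- The orbit relation is the projection of a closed subset of `(Y × Y) × G`, and `G` is compact.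
  have hproj : {q : Y × Y | Quot.mk r q.1 = Quot.mk r q.2} =
      Prod.fst '' {w : (Y × Y) × G | b w.1.1 w.2 = w.1.2} := by
    ext ⟨x, y⟩
    simp [r, (equivalence_orbit b hone hmul).quot_mk_eq_iff]
  rw [hproj]
  exact isClosedMap_fst_of_compactSpace _ (isClosed_eq (by fun_prop) (by fun_prop))

end OrbitQuotient

theorem CompactSpace.nonempty_iInter_of_antitone {L Y : Type*} [Preorder L] [IsDirectedOrder L]
    [TopologicalSpace Y] [CompactSpace Y] [Nonempty Y] {K : L → Set Y} (hK : Antitone K)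
    (hne : ∀ S, (K S).Nonempty) (hcl : ∀ S, IsClosed (K S)) : (⋂ S, K S).Nonempty := by
  rcases isEmpty_or_nonempty L with hL | hL
  · simp
  · exact IsCompact.nonempty_iInter_of_directed_nonempty_isCompact_isClosed K hK.directed_ge hne
      (fun S => (hcl S).isCompact) hcl

namespace ProjLim

variable {L : Type*} [PartialOrder L] {X : L → Type*} [∀ S, TopologicalSpace (X S)]
  [∀ S, CompactSpace (X S)] [∀ S, T2Space (X S)] {p : ∀ S S', S ≤ S' → X S' → X S}

theorem compactSpace (hp_cont : ∀ S S' (h : S ≤ S'), Continuous (p S S' h)) :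
    CompactSpace (ProjLim X p) := by
  have hcl : IsClosed {x : ∀ S, X S | ∀ S S' (h : S ≤ S'), p S S' h (x S') = x S} := by
    simp only [ofPred_forall]
    exact isClosed_iInter fun S => isClosed_iInter fun S' => isClosed_iInter fun h =>
      isClosed_eq ((hp_cont S S' h).comp (continuous_apply S')) (continuous_apply S)
  exact isCompact_iff_compactSpace.mp hcl.isCompact

theorem exists_forall_mem [IsDirectedOrder L]
    (hp_cont : ∀ S S' (h : S ≤ S'), Continuous (p S S' h)) (hp_id : ∀ S, p S S le_rfl = id)
    (hp_comp : ∀ S S' S'' (h : S ≤ S') (h' : S' ≤ S''),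
      p S S' h ∘ p S' S'' h' = p S S'' (h.trans h'))
    (F : ∀ S, Set (X S)) (hF_closed : ∀ S, IsClosed (F S)) (hF_ne : ∀ S, (F S).Nonempty)
    (hF_maps : ∀ S S' (h : S ≤ S'), MapsTo (p S S' h) (F S') (F S)) :
    ∃ x : ProjLim X p, ∀ S, x.1 S ∈ F S := by
  classical
  have : ∀ S, Nonempty (X S) := fun S => (hF_ne S).to_subtype.map Subtype.val
  let Z (S : L) : Set (∀ T, X T) :=
    {x | x S ∈ F S ∧ ∀ T (h : T ≤ S), p T S h (x S) = x T}
  have hZ_closed (S : L) : IsClosed (Z S) := by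
    show IsClosed ({x : ∀ T, X T | x S ∈ F S} ∩ {x | ∀ T (h : T ≤ S), p T S h (x S) = x T})
    refine ((hF_closed S).preimage (continuous_apply S)).inter ?_
    simp only [ofPred_forall]
    exact isClosed_iInter fun T => isClosed_iInter fun h =>
      isClosed_eq ((hp_cont T S h).comp (continuous_apply S)) (continuous_apply T)
  have hZ_ne (S : L) : (Z S).Nonempty := by
    obtain ⟨y, hy⟩ := hF_ne S
    refine ⟨fun T => if h : T ≤ S then p T S h y else Classical.arbitrary _, ?_, fun T h => ?_⟩
    · simpa [hp_id S] using hy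
    · simp [dif_pos h, hp_id S]
  have hZ_anti : Antitone Z := by
    rintro S S' hSS' x ⟨hxF, hx⟩
    refine ⟨hx S hSS' ▸ hF_maps S S' hSS' hxF, fun T hTS => ?_⟩
    rw [← hx S hSS', ← hx T (hTS.trans hSS'), ← hp_comp T S S' hTS hSS', Function.comp_apply]
  obtain ⟨x, hx⟩ := CompactSpace.nonempty_iInter_of_antitone hZ_anti hZ_ne hZ_closed
  rw [mem_iInter] at hx
  exact ⟨⟨x, fun S S' h => (hx S').2 S h⟩, fun S => (hx S).1⟩

end ProjLim

section NatMap

variable {L : Type*} [PartialOrder L] {X : L → Type*} [∀ S, TopologicalSpace (X S)]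
  {p : ∀ S S', S ≤ S' → X S' → X S} {G : Type*} {a : ∀ S, X S → G → X S}

theorem limOrbRel_of_forall_orbRel [IsDirectedOrder L] [∀ S, T2Space (X S)] [Group G]
    [TopologicalSpace G] [CompactSpace G] (ha_cont : ∀ S (x : X S), Continuous (a S x))
    (hequiv : ∀ (S S' : L) (h : S ≤ S') (x : X S') (g : G),
      p S S' h (a S' x g) = a S (p S S' h x) g)
    {x y : ProjLim X p} (hxy : ∀ S, OrbRel X a S (x.1 S) (y.1 S)) : LimOrbRel X p a x y := by
  let K (S : L) : Set G := {g | a S (x.1 S) g = y.1 S}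
  have hK_anti : Antitone K := by
    intro S S' hSS' g hg
    simpa only [K, mem_ofPred_eq, hequiv, x.2, y.2] using congrArg (p S S' hSS') hg
  obtain ⟨g, hg⟩ := CompactSpace.nonempty_iInter_of_antitone hK_anti hxy
    fun S => isClosed_eq (ha_cont S _) continuous_const
  exact ⟨g, mem_iInter.mp hg⟩

variable {hequiv : ∀ (S S' : L) (h : S ≤ S') (x : X S') (g : G),
  p S S' h (a S' x g) = a S (p S S' h x) g}

theorem continuous_natMap : Continuous (NatMap X p a hequiv) :=
  continuous_quot_lift _ <| Continuous.subtype_mk (continuous_pi fun S =>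
    continuous_quot_mk.comp ((continuous_apply S).comp continuous_subtype_val)) _

theorem injective_natMap [IsDirectedOrder L] [∀ S, T2Space (X S)] [Group G]
    [TopologicalSpace G] [CompactSpace G] (ha_cont : ∀ S (x : X S), Continuous (a S x))
    (ha_one : ∀ S x, a S x 1 = x)
    (ha_mul : ∀ (S : L) (x : X S) (g g' : G), a S (a S x g) g' = a S x (g * g')) :
    Function.Injective (NatMap X p a hequiv) := by
  rintro ⟨x⟩ ⟨y⟩ hxy
  refine Quot.sound (limOrbRel_of_forall_orbRel ha_cont hequiv fun S => ?_)
  exact ((equivalence_orbit (a S) (ha_one S) (ha_mul S)).quot_mk_eq_iff _ _).mp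
    (congrFun (congrArg Subtype.val hxy) S)

theorem surjective_natMap [IsDirectedOrder L] [∀ S, CompactSpace (X S)] [∀ S, T2Space (X S)]
    [∀ S, T1Space (QuotFam X a S)] (hp_cont : ∀ S S' (h : S ≤ S'), Continuous (p S S' h))
    (hp_id : ∀ S, p S S le_rfl = id)
    (hp_comp : ∀ S S' S'' (h : S ≤ S') (h' : S' ≤ S''),
      p S S' h ∘ p S' S'' h' = p S S'' (h.trans h')) :
    Function.Surjective (NatMap X p a hequiv) := by
  intro ξ
  obtain ⟨x, hx⟩ := ProjLim.exists_forall_mem hp_cont hp_id hp_comp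
    (fun S => (Quot.mk _ : X S → QuotFam X a S) ⁻¹' {ξ.1 S})
    (fun S => (isClosed_singleton (x := ξ.1 S)).preimage continuous_quot_mk)
    (fun S => ⟨(ξ.1 S).out, Quot.out_eq _⟩)
    (fun S S' h z hz => (congrArg (QuotProj X p a hequiv S S' h) hz).trans (ξ.2 S S' h))
  exact ⟨Quot.mk _ x, Subtype.ext (funext hx)⟩

end NatMap

theorem quotient_of_limit_homeomorph_limit_of_quotients_general
    {L : Type*} [PartialOrder L] [IsDirected L (· ≤ ·)]
    (X : L → Type*) [∀ S, TopologicalSpace (X S)]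
    [∀ S, CompactSpace (X S)] [∀ S, T2Space (X S)]
    {G : Type*} [Group G] [TopologicalSpace G] [CompactSpace G]
    (p : ∀ S S', S ≤ S' → X S' → X S)
    (hp_cont : ∀ S S' (h : S ≤ S'), Continuous (p S S' h))
    (hp_id : ∀ S, p S S le_rfl = id)
    (hp_comp : ∀ S S' S'' (h : S ≤ S') (h' : S' ≤ S''),
      p S S' h ∘ p S' S'' h' = p S S'' (h.trans h'))
    (a : ∀ S, X S → G → X S)
    (ha_cont : ∀ S, Continuous fun q : X S × G => a S q.1 q.2)
    (ha_one : ∀ S x, a S x 1 = x)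
    (ha_mul : ∀ (S : L) (x : X S) (g g' : G), a S (a S x g) g' = a S x (g * g'))
    (hequiv : ∀ (S S' : L) (h : S ≤ S') (x : X S') (g : G),
      p S S' h (a S' x g) = a S (p S S' h x) g) :
    IsHomeomorph (NatMap X p a hequiv) := by
  have (S : L) : T2Space (QuotFam X a S) :=
    t2Space_quot_orbit (a S) (ha_cont S) (ha_one S) (ha_mul S)
  have : T2Space (QuotFamLim X p a hequiv) :=
    inferInstanceAs (T2Space {ξ : ∀ S, QuotFam X a S // _})
  have : CompactSpace (ProjLim X p) := ProjLim.compactSpace hp_cont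
  have : CompactSpace (Quot (LimOrbRel X p a)) := Quot.compactSpace
  have ha_cont_right (S : L) (x : X S) : Continuous (a S x) := by fun_prop
  exact isHomeomorph_iff_continuous_bijective.mpr ⟨continuous_natMap,
    injective_natMap ha_cont_right ha_one ha_mul, surjective_natMap hp_cont hp_id hp_comp⟩

/-- If a compact Hausdorff topological group `G` acts consistently
(continuously and equivariantly) on a compact Hausdorff projective family, then the
natural map from the quotient `X̄/G` of the projective limit to the projective limit
`X̄_G` of the quotient family is a homeomorphism. -/
theorem quotient_of_limit_homeomorph_limit_of_quotients
    {L : Type*} [PartialOrder L] [IsDirected L (· ≤ ·)]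
    (X : L → Type*) [∀ S, TopologicalSpace (X S)]
    [∀ S, CompactSpace (X S)] [∀ S, T2Space (X S)] [∀ S, Nonempty (X S)]
    {G : Type*} [Group G] [TopologicalSpace G] [IsTopologicalGroup G]
    [CompactSpace G] [T2Space G]
    (p : ∀ S S', S ≤ S' → X S' → X S)
    (hp_cont : ∀ S S' (h : S ≤ S'), Continuous (p S S' h))
    (hp_surj : ∀ S S' (h : S ≤ S'), Function.Surjective (p S S' h))
    (hp_id : ∀ S, p S S le_rfl = id)
    (hp_comp : ∀ S S' S'' (h : S ≤ S') (h' : S' ≤ S''),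
      p S S' h ∘ p S' S'' h' = p S S'' (h.trans h'))
    (a : ∀ S, X S → G → X S)
    (ha_cont : ∀ S, Continuous fun q : X S × G => a S q.1 q.2)
    (ha_one : ∀ S x, a S x 1 = x)
    (ha_mul : ∀ (S : L) (x : X S) (g g' : G), a S (a S x g) g' = a S x (g * g'))
    (hequiv : ∀ (S S' : L) (h : S ≤ S') (x : X S') (g : G),
      p S S' h (a S' x g) = a S (p S S' h x) g) :
    IsHomeomorph (NatMap X p a hequiv) :=
  quotient_of_limit_homeomorph_limit_of_quotients_general X p hp_cont hp_id hp_comp a ha_cont ha_one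
    ha_mul hequiv
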